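/- arXiv:2311.12017 — 4 statements merged into one kernel-verified Lean document; each statement's English description precedes it below -/
import Mathlib

section
/- Fix integers n ≥ 1 and 1 ≤ m₀ ≤ n. For each m₀ ≤ m ≤ n let F_m : {0,1}^m → {0,1}^m be a pairwise independent random function, with F_{m₀},…,F_n mutually independent, and define the random map r := r^{m₀} by the downward recursion r^{n+1} = id and r^m(x) = r^{m+1}(F_m(MSB_m(x)) ‖ LSB_{n−m}(x)). Additionally let k be a uniformly random key for a 4-wise independent family {h_k : {0,1}^n → {0,1}}, independent of (F_{m₀},…,F_n), and set s(x) := h_k(r(x)). Let X ⊆ {1,…,n} with 1 ≤ |X| = m ≤ n/2, and let T be the random 2^m × 2^{n−m} matrix with entries T_{ij} = (−1)^{s(i‖_X j)} for i ∈ {0,1}^X, j ∈ {0,1}^{X^c}. Then E[‖T·Tᵀ‖_F²] ≤ 5n·2^{2n−m}. -/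
/-!
Expanding `‖T Tᵀ‖_F²` gives a sum over pairs `x = i ‖_X j`, `y = i' ‖_X j'` of
`E[σ(x) σ(i' ‖_X j) σ(i ‖_X j') σ(y)]` with `σ = (-1)^s`. Since `h` is 4-wise independent and
independent of `r`, this expectation vanishes unless `r x` coincides with `r` of one of the other
three points, and it is at most `1` in any case. Two distinct points first merge in round `m` only
if they agree on `LSB_{n-m}`, and then with probability `2^{-m}` by pairwise independence of `F_m`;
as the rounds are independent, `P(r x = r z) ≤ ∑_m 2^{-m} [x, z agree on LSB_{n-m}]`. The number of
pairs `(x, y)` agreeing on a coordinate set `S` is `2^{2n-|S|}`, and every set `S` occurring here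
has `|S| ≥ |X| - m` because `|X| ≤ n/2`; so each of the at most `3n + 2` terms contributes at most
`2^{2n-|X|}`.
-/

open scoped BigOperators Classical
open Matrix

noncomputable def pr {Ω : Type*} [Fintype Ω] (p : Ω → ℝ) (E : Ω → Prop) : ℝ :=
  ∑ ω, if E ω then p ω else 0

def frobSq {a b : Type*} [Fintype a] [Fintype b] (M : Matrix a b ℝ) : ℝ :=
  ∑ i, ∑ j, M i j ^ 2

/-- `MSB_m(x)`; index `0` is the most significant bit. -/
def msb {n : ℕ} (m : ℕ) (h : m ≤ n) (x : Fin n → Bool) : Fin m → Bool :=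
  fun s => x ⟨s.1, lt_of_lt_of_le s.2 h⟩

/-- `f_m(MSB_m(x)) ‖ LSB_{n-m}(x)`. -/
def rStep (n : ℕ) (f : ∀ m : ℕ, (Fin m → Bool) → (Fin m → Bool)) (m : ℕ) (h : m ≤ n)
    (x : Fin n → Bool) : Fin n → Bool :=
  fun t => if ht : (t : ℕ) < m then f m (msb m h x) ⟨t.1, ht⟩ else x t

/-- The downward recursion `r^{n+1} = id`, `r^m(x) = r^{m+1}(f_m(MSB_m(x)) ‖ LSB_{n-m}(x))`. -/
def rRec (n : ℕ) (f : ∀ m : ℕ, (Fin m → Bool) → (Fin m → Bool)) (m : ℕ)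
    (x : Fin n → Bool) : Fin n → Bool :=
  if h : m ≤ n then rRec n f (m + 1) (rStep n f m h x) else x
termination_by n + 1 - m
decreasing_by omega

/-- `i ‖_X j`. -/
def mergeCut {n : ℕ} (X : Finset (Fin n)) (i : {t : Fin n // t ∈ X} → Bool)
    (j : {t : Fin n // t ∉ X} → Bool) : Fin n → Bool :=
  fun t => if h : t ∈ X then i ⟨t, h⟩ else j ⟨t, h⟩

section FiniteProbability

variable {Ω β γ : Type*} [Fintype Ω] [Fintype β] [Fintype γ] {p : Ω → ℝ}

lemma pr_congr {E E' : Ω → Prop} (h : ∀ ω, E ω ↔ E' ω) : pr p E = pr p E' := by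
  simp only [pr, h]

lemma pr_eq_zero_of_forall_not {E : Ω → Prop} (h : ∀ ω, ¬ E ω) : pr p E = 0 :=
  Finset.sum_eq_zero fun ω _ => if_neg (h ω)

lemma pr_eq_sum_mul (E : Ω → Prop) [DecidablePred E] :
    pr p E = ∑ ω, p ω * if E ω then 1 else 0 := by
  simp only [pr, mul_ite, mul_one, mul_zero]
  congr!

lemma sum_pr_and_eq (V : Ω → β) (E : Ω → Prop) :
    ∑ b, pr p (fun ω => E ω ∧ V ω = b) = pr p E := by
  unfold pr
  rw [Finset.sum_comm]
  refine Finset.sum_congr rfl fun ω _ => ?_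
  by_cases hE : E ω <;> simp [hE]

lemma sum_mul_comp_eq_sum_pr (V : Ω → β) (f : β → ℝ) :
    ∑ ω, p ω * f (V ω) = ∑ b, pr p (fun ω => V ω = b) * f b := by
  simp only [pr, Finset.sum_mul, ite_mul, zero_mul]
  rw [Finset.sum_comm]
  simp

lemma sum_pr_eq_one (hp1 : ∑ ω, p ω = 1) (V : Ω → β) : ∑ b, pr p (fun ω => V ω = b) = 1 := by
  simpa [hp1] using (sum_mul_comp_eq_sum_pr (p := p) V fun _ => 1).symm

lemma pr_eq_of_pr_and_eq_mul (hp1 : ∑ ω, p ω = 1) {A : Ω → Prop} {Z : Ω → γ} {c : ℝ}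
    (h : ∀ z, pr p (fun ω => A ω ∧ Z ω = z) = c * pr p (fun ω => Z ω = z)) : pr p A = c := by
  rw [← sum_pr_and_eq Z, Finset.sum_congr rfl fun z _ => h z, ← Finset.mul_sum, sum_pr_eq_one hp1,
    mul_one]

lemma sum_mul_le_one (hp0 : ∀ ω, 0 ≤ p ω) (hp1 : ∑ ω, p ω = 1) {f : Ω → ℝ}
    (hf : ∀ ω, f ω ≤ 1) : ∑ ω, p ω * f ω ≤ 1 :=
  hp1 ▸ Finset.sum_le_sum fun ω _ => mul_le_of_le_one_right (hp0 ω) (hf ω)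

lemma pr_le_one (hp0 : ∀ ω, 0 ≤ p ω) (hp1 : ∑ ω, p ω = 1) (E : Ω → Prop) : pr p E ≤ 1 := by
  rw [pr_eq_sum_mul]
  exact sum_mul_le_one hp0 hp1 fun ω => by split <;> norm_num

end FiniteProbability

lemma forall_mem_erase_and_eq_iff {ι : Type*} [DecidableEq ι] {α : ι → Type*} {s : Finset ι}
    {a : ι} (ha : a ∈ s) (f g : ∀ i, α i) (φ : α a) :
    ((∀ i ∈ s.erase a, f i = g i) ∧ f a = φ) ↔ ∀ i ∈ s, f i = Function.update g a φ i := by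
  constructor
  · rintro ⟨hs, ha⟩ i hi
    by_cases hia : i = a
    · subst hia; simpa using ha
    · rw [Function.update_of_ne hia]; exact hs i (Finset.mem_erase.2 ⟨hia, hi⟩)
  · intro hs
    refine ⟨fun i hi => ?_, by simpa using hs a ha⟩
    rw [hs i (Finset.mem_of_mem_erase hi), Function.update_of_ne (Finset.ne_of_mem_erase hi)]

section Independence

variable {Ω β γ δ : Type*} [Fintype Ω] {p : Ω → ℝ}

def IndepFunPr (p : Ω → ℝ) (Y : Ω → β) (Z : Ω → γ) : Prop :=
  ∀ y z, pr p (fun ω => Y ω = y ∧ Z ω = z) = pr p (fun ω => Y ω = y) * pr p (fun ω => Z ω = z)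

lemma IndepFunPr.symm {Y : Ω → β} {Z : Ω → γ} (h : IndepFunPr p Y Z) : IndepFunPr p Z Y :=
  fun z y => by rw [pr_congr fun ω => and_comm, h y z, mul_comm]

lemma IndepFunPr.of_determined_left [Fintype β] {Y : Ω → β} {Z : Ω → γ} {W : Ω → δ}
    (h : IndepFunPr p Y Z) (hW : ∀ ω ω', Y ω = Y ω' → W ω = W ω') : IndepFunPr p W Z := by
  intro w z
  have fiber : ∀ y, pr p (fun ω => (W ω = w ∧ Z ω = z) ∧ Y ω = y)
      = pr p (fun ω => W ω = w ∧ Y ω = y) * pr p (fun ω => Z ω = z) := by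
    intro y
    by_cases hy : ∃ ω₀, Y ω₀ = y ∧ W ω₀ = w
    · obtain ⟨ω₀, rfl, rfl⟩ := hy
      have hWY : ∀ ω, W ω = W ω₀ ∧ Y ω = Y ω₀ ↔ Y ω = Y ω₀ :=
        fun ω => ⟨And.right, fun hω => ⟨hW ω ω₀ hω, hω⟩⟩
      rw [pr_congr fun ω => by rw [and_right_comm, hWY], pr_congr hWY, h]
    · push Not at hy
      rw [pr_eq_zero_of_forall_not fun ω hω => hy ω hω.2 hω.1.1,
        pr_eq_zero_of_forall_not fun ω hω => hy ω hω.2 hω.1, zero_mul]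
  rw [← sum_pr_and_eq Y, Finset.sum_congr rfl fun y _ => fiber y, ← Finset.sum_mul,
    sum_pr_and_eq]

lemma IndepFunPr.sum_mul_eq [Fintype β] [Fintype γ] {Y : Ω → β} {Z : Ω → γ}
    (h : IndepFunPr p Y Z) (Φ : β → γ → ℝ) :
    ∑ ω, p ω * Φ (Y ω) (Z ω) = ∑ ω, p ω * ∑ ω', p ω' * Φ (Y ω) (Z ω') := by
  calc ∑ ω, p ω * Φ (Y ω) (Z ω)
      = ∑ yz : β × γ, pr p (fun ω => (Y ω, Z ω) = yz) * Φ yz.1 yz.2 :=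
        sum_mul_comp_eq_sum_pr (fun ω => (Y ω, Z ω)) fun yz => Φ yz.1 yz.2
    _ = ∑ y, pr p (fun ω => Y ω = y) * ∑ z, pr p (fun ω => Z ω = z) * Φ y z := by
        simp only [Fintype.sum_prod_type, Finset.mul_sum]
        refine Finset.sum_congr rfl fun y _ => Finset.sum_congr rfl fun z _ => ?_
        rw [pr_congr fun ω => Prod.ext_iff, h, mul_assoc]
    _ = ∑ ω, p ω * ∑ ω', p ω' * Φ (Y ω) (Z ω') := by
        simp only [sum_mul_comp_eq_sum_pr Z]
        exact (sum_mul_comp_eq_sum_pr Y _).symm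

variable {ι : Type*} [DecidableEq ι] {α : ι → Type*}

def iIndepPr (p : Ω → ℝ) (F : ∀ i, Ω → α i) (s : Finset ι) : Prop :=
  ∀ g : ∀ i, α i, pr p (fun ω => ∀ i ∈ s, F i ω = g i) = ∏ i ∈ s, pr p (fun ω => F i ω = g i)

lemma iIndepPr.erase [∀ i, Fintype (α i)] (hp1 : ∑ ω, p ω = 1) {F : ∀ i, Ω → α i}
    {s : Finset ι} (h : iIndepPr p F s) (a : ι) : iIndepPr p F (s.erase a) := by
  by_cases ha : a ∈ s
  swap
  · rwa [Finset.erase_eq_of_notMem ha]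
  intro g
  have hprod : ∀ φ : α a, ∏ i ∈ s, pr p (fun ω => F i ω = Function.update g a φ i)
      = pr p (fun ω => F a ω = φ) * ∏ i ∈ s.erase a, pr p (fun ω => F i ω = g i) := by
    intro φ
    rw [← Finset.mul_prod_erase s _ ha, Function.update_self]
    congr 1
    refine Finset.prod_congr rfl fun i hi => ?_
    rw [Function.update_of_ne (Finset.ne_of_mem_erase hi)]
  rw [← sum_pr_and_eq (F a)]
  simp only [pr_congr fun ω => forall_mem_erase_and_eq_iff ha (F · ω) g _, h _, hprod,
    ← Finset.sum_mul, sum_pr_eq_one hp1, one_mul]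

lemma iIndepPr.pr_and_eq_mul [∀ i, Fintype (α i)] (hp1 : ∑ ω, p ω = 1) {F : ∀ i, Ω → α i}
    {s : Finset ι} {a : ι} (ha : a ∉ s) (h : iIndepPr p F (insert a s)) (g : ∀ i, α i)
    (φ : α a) :
    pr p (fun ω => (∀ i ∈ s, F i ω = g i) ∧ F a ω = φ)
      = pr p (fun ω => ∀ i ∈ s, F i ω = g i) * pr p (fun ω => F a ω = φ) := by
  have hs := h.erase hp1 a
  rw [Finset.erase_insert ha] at hs
  have hiff := fun ω => forall_mem_erase_and_eq_iff (Finset.mem_insert_self a s) (F · ω) g φ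
  simp only [Finset.erase_insert ha] at hiff
  rw [pr_congr hiff, h, Finset.prod_insert ha, Function.update_self, hs, mul_comm]
  congr 1
  refine Finset.prod_congr rfl fun i hi => ?_
  rw [Function.update_of_ne (ne_of_mem_of_not_mem hi ha)]

lemma indepFunPr_of_forall_pr_and [∀ i, Fintype (α i)] {F : ∀ i, Ω → α i} {s : Finset ι}
    {Z : Ω → γ} {W : Ω → δ}
    (h : ∀ (g : ∀ i, α i) z, pr p (fun ω => (∀ i ∈ s, F i ω = g i) ∧ Z ω = z)
      = pr p (fun ω => ∀ i ∈ s, F i ω = g i) * pr p (fun ω => Z ω = z))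
    (hW : ∀ ω ω', (∀ i ∈ s, F i ω = F i ω') → W ω = W ω') : IndepFunPr p W Z := by
  have hrestrict : IndepFunPr p (fun ω => s.restrict fun i => F i ω) Z := by
    intro c z
    by_cases hc : ∃ ω₀, (s.restrict fun i => F i ω₀) = c
    · obtain ⟨ω₀, rfl⟩ := hc
      have hiff : ∀ ω, (s.restrict fun i => F i ω) = (s.restrict fun i => F i ω₀)
          ↔ ∀ i ∈ s, F i ω = F i ω₀ := by
        simp [funext_iff]
      rw [pr_congr fun ω => and_congr_left' (hiff ω), pr_congr hiff]
      exact h (fun i => F i ω₀) z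
    · push Not at hc
      rw [pr_eq_zero_of_forall_not fun ω hω => hc ω hω.1,
        pr_eq_zero_of_forall_not fun ω hω => hc ω hω, zero_mul]
  exact hrestrict.of_determined_left fun ω ω' hωω' =>
    hW ω ω' fun i hi => congrFun hωω' ⟨i, hi⟩

end Independence

section Rounds

variable {n : ℕ}

/-- The positions of `LSB_{n-k}(x)` in an `n`-bit string `x`. -/
def lsbCoords (n k : ℕ) : Finset (Fin n) := {t | k ≤ (t : ℕ)}

lemma mem_lsbCoords {k : ℕ} {t : Fin n} : t ∈ lsbCoords n k ↔ k ≤ (t : ℕ) := by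
  simp [lsbCoords]

lemma card_le_card_inter_lsbCoords_add (A : Finset (Fin n)) (k : ℕ) :
    A.card ≤ (A ∩ lsbCoords n k).card + k := by
  have hlow : (A \ lsbCoords n k).card ≤ k := by
    calc (A \ lsbCoords n k).card ≤ (Finset.univ.filter fun t : Fin n => (t : ℕ) < k).card :=
          Finset.card_le_card fun t ht => by
            simp only [Finset.mem_sdiff, mem_lsbCoords] at ht
            simpa using ht.2
      _ ≤ k := Fin.card_filter_val_lt.trans_le (min_le_right n k)
  have := Finset.card_inter_add_card_sdiff A (lsbCoords n k)
  omega

variable {f g : ∀ k, (Fin k → Bool) → (Fin k → Bool)}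

lemma rRec_of_le {m : ℕ} (h : m ≤ n) (x : Fin n → Bool) :
    rRec n f m x = rRec n f (m + 1) (rStep n f m h x) := by
  rw [rRec, dif_pos h]

lemma rRec_of_lt {m : ℕ} (h : n < m) (x : Fin n → Bool) : rRec n f m x = x := by
  rw [rRec, dif_neg (not_le.2 h)]

lemma rRec_congr {m : ℕ} (h : ∀ k ∈ Finset.Icc m n, f k = g k) : rRec n f m = rRec n g m := by
  funext x
  by_cases hmn : m ≤ n
  · have hstep : rStep n f m hmn x = rStep n g m hmn x := by
      unfold rStep
      rw [h m (Finset.mem_Icc.2 ⟨le_rfl, hmn⟩)]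
    rw [rRec_of_le hmn, rRec_of_le hmn, hstep,
      rRec_congr fun k hk => h k (Finset.Icc_subset_Icc_left m.le_succ hk)]
  · rw [rRec_of_lt (not_le.1 hmn), rRec_of_lt (not_le.1 hmn)]
termination_by n + 1 - m

lemma eqOn_rStep_iff {m : ℕ} (h : m ≤ n) {k : ℕ} (hk : m ≤ k) (x y : Fin n → Bool) :
    Set.EqOn (rStep n f m h x) (rStep n f m h y) ↑(lsbCoords n k)
      ↔ Set.EqOn x y ↑(lsbCoords n k) := by
  have hkeep : ∀ z : Fin n → Bool, ∀ t ∈ lsbCoords n k, rStep n f m h z t = z t := by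
    intro z t ht
    rw [mem_lsbCoords] at ht
    simp only [rStep, dif_neg (show ¬ (t : ℕ) < m by omega)]
  constructor
  · intro hxy t ht
    rw [← hkeep x t ht, ← hkeep y t ht]
    exact hxy ht
  · intro hxy t ht
    rw [hkeep x t ht, hkeep y t ht]
    exact hxy ht

lemma rStep_eq_rStep_iff {m : ℕ} (h : m ≤ n) (x y : Fin n → Bool) :
    rStep n f m h x = rStep n f m h y
      ↔ Set.EqOn x y ↑(lsbCoords n m) ∧ f m (msb m h x) = f m (msb m h y) := by
  constructor
  · intro hxy
    refine ⟨(eqOn_rStep_iff h le_rfl x y).1 fun t _ => by rw [hxy], funext fun s => ?_⟩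
    simpa [rStep, s.2] using congrFun hxy ⟨s, s.2.trans_le h⟩
  · rintro ⟨hlow, hhigh⟩
    funext t
    by_cases ht : (t : ℕ) < m
    · simp only [rStep, dif_pos ht, hhigh]
    · simp only [rStep, dif_neg ht]
      exact hlow (mem_lsbCoords.2 (not_lt.1 ht))

lemma msb_ne_msb {m : ℕ} (h : m ≤ n) {x y : Fin n → Bool} (hxy : x ≠ y)
    (hlow : Set.EqOn x y ↑(lsbCoords n m)) : msb m h x ≠ msb m h y := by
  intro hmsb
  refine hxy (funext fun t => ?_)
  by_cases ht : (t : ℕ) < m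
  · simpa [msb] using congrFun hmsb ⟨t, ht⟩
  · exact hlow (mem_lsbCoords.2 (not_lt.1 ht))

end Rounds

noncomputable def agreementWeight {σ : Type*} (S : Finset σ) (k : ℕ) (x y : σ → Bool) : ℝ :=
  if Set.EqOn x y ↑S then 1 / 2 ^ k else 0

lemma agreementWeight_nonneg {σ : Type*} (S : Finset σ) (k : ℕ) (x y : σ → Bool) :
    0 ≤ agreementWeight S k x y := by
  unfold agreementWeight
  positivity

section Collision

variable {Ω : Type*} [Fintype Ω] {p : Ω → ℝ}

lemma pr_apply_eq_apply_of_pairwise {κ ν : Type*} [Fintype ν] {G : Ω → κ → ν} {a b : κ} {c : ℝ}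
    (hG : ∀ u v, pr p (fun ω => G ω a = u ∧ G ω b = v) = c) :
    pr p (fun ω => G ω a = G ω b) = Fintype.card ν * c := by
  rw [← sum_pr_and_eq (G · a)]
  have hdiag : ∀ u, pr p (fun ω => G ω a = G ω b ∧ G ω a = u) = c := fun u => by
    rw [← hG u u]
    exact pr_congr fun ω => ⟨fun h => ⟨h.2, h.1 ▸ h.2⟩, fun h => ⟨h.1.trans h.2.symm, h.1⟩⟩
  simp [hdiag]

lemma pr_rStep_eq {n m : ℕ} (h : m ≤ n) {F : ∀ k, Ω → (Fin k → Bool) → (Fin k → Bool)}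
    (hpair : ∀ a b : Fin m → Bool, a ≠ b → ∀ u v,
      pr p (fun ω => F m ω a = u ∧ F m ω b = v) = ((1 : ℝ) / 2 ^ m) ^ 2)
    {x y : Fin n → Bool} (hxy : x ≠ y) :
    pr p (fun ω => rStep n (fun k => F k ω) m h x = rStep n (fun k => F k ω) m h y)
      = agreementWeight (lsbCoords n m) m x y := by
  simp only [rStep_eq_rStep_iff, agreementWeight]
  split_ifs with hlow
  · rw [pr_congr fun ω => and_iff_right hlow,
      pr_apply_eq_apply_of_pairwise (hpair _ _ (msb_ne_msb h hxy hlow))]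
    simp
    field_simp
  · exact pr_eq_zero_of_forall_not fun ω hω => hlow hω.1

lemma indepFunPr_rStep_rRec (hp1 : ∑ ω, p ω = 1) {n m : ℕ} (hmn : m ≤ n)
    {F : ∀ k, Ω → (Fin k → Bool) → (Fin k → Bool)} (hind : iIndepPr p F (Finset.Icc m n)) :
    IndepFunPr p (fun ω => rStep n (fun k => F k ω) m hmn)
      (fun ω => rRec n (fun k => F k ω) (m + 1)) := by
  rw [← Finset.insert_Icc_add_one_left_eq_Icc hmn] at hind
  have hrest : IndepFunPr p (fun ω => rRec n (fun k => F k ω) (m + 1)) (F m) :=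
    indepFunPr_of_forall_pr_and (hind.pr_and_eq_mul hp1 (by simp)) fun ω ω' h => rRec_congr h
  exact hrest.symm.of_determined_left fun ω ω' h => by
    funext z t
    simp only [rStep, h]

theorem pr_rRec_eq_le (hp0 : ∀ ω, 0 ≤ p ω) (hp1 : ∑ ω, p ω = 1) {n m : ℕ}
    {F : ∀ k, Ω → (Fin k → Bool) → (Fin k → Bool)}
    (hpair : ∀ k, m ≤ k → k ≤ n → ∀ a b : Fin k → Bool, a ≠ b → ∀ u v,
      pr p (fun ω => F k ω a = u ∧ F k ω b = v) = ((1 : ℝ) / 2 ^ k) ^ 2)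
    (hind : iIndepPr p F (Finset.Icc m n)) {x y : Fin n → Bool} (hxy : x ≠ y) :
    pr p (fun ω => rRec n (fun k => F k ω) m x = rRec n (fun k => F k ω) m y)
      ≤ ∑ k ∈ Finset.Icc m n, agreementWeight (lsbCoords n k) k x y := by
  by_cases hmn : m ≤ n
  swap
  · rw [pr_eq_zero_of_forall_not fun ω hω => hxy (by simpa [rRec_of_lt (not_le.1 hmn)] using hω)]
    exact Finset.sum_nonneg fun k _ => agreementWeight_nonneg _ _ _ _
  set S : Ω → (Fin n → Bool) → Fin n → Bool := fun ω => rStep n (fun k => F k ω) m hmn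
  set Q : Ω → (Fin n → Bool) → Fin n → Bool := fun ω => rRec n (fun k => F k ω) (m + 1)
  set C := ∑ k ∈ Finset.Icc (m + 1) n, agreementWeight (lsbCoords n k) k x y
  have hC : 0 ≤ C := Finset.sum_nonneg fun k _ => agreementWeight_nonneg _ _ _ _
  have hIcc : insert m (Finset.Icc (m + 1) n) = Finset.Icc m n :=
    Finset.insert_Icc_add_one_left_eq_Icc hmn
  have hm : m ∉ Finset.Icc (m + 1) n := by simp
  have hind' : iIndepPr p F (Finset.Icc (m + 1) n) := by
    simpa [← hIcc, Finset.erase_insert hm] using hind.erase hp1 m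
  have hSQ : IndepFunPr p S Q := indepFunPr_rStep_rRec hp1 hmn hind
  -- Given the first round, the later ones act on the fixed inputs `S ω x`, `S ω y`, which agree
  -- on `LSB_{n-k}` for `k > m` exactly when `x` and `y` do.
  have hinner : ∀ ω, ∑ ω', p ω' * (if Q ω' (S ω x) = Q ω' (S ω y) then (1 : ℝ) else 0)
      ≤ (if S ω x = S ω y then 1 else 0) + C := by
    intro ω
    rw [← pr_eq_sum_mul]
    by_cases hS : S ω x = S ω y
    · rw [if_pos hS]
      linarith [pr_le_one hp0 hp1 fun ω' => Q ω' (S ω x) = Q ω' (S ω y)]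
    · rw [if_neg hS, zero_add]
      refine (pr_rRec_eq_le hp0 hp1 (fun k hk hkn => hpair k (by omega) hkn) hind' hS).trans_eq ?_
      refine Finset.sum_congr rfl fun k hk => ?_
      simp only [agreementWeight, S, eqOn_rStep_iff hmn (k := k) (by simp at hk; omega)]
  calc pr p (fun ω => rRec n (fun k => F k ω) m x = rRec n (fun k => F k ω) m y)
      = ∑ ω, p ω * ∑ ω', p ω' * (if Q ω' (S ω x) = Q ω' (S ω y) then 1 else 0) := by
        rw [pr_eq_sum_mul, ← hSQ.sum_mul_eq fun s q => if q (s x) = q (s y) then (1 : ℝ) else 0]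
        simp only [S, Q, rRec_of_le hmn]
    _ ≤ ∑ ω, p ω * ((if S ω x = S ω y then 1 else 0) + C) :=
        Finset.sum_le_sum fun ω _ => mul_le_mul_of_nonneg_left (hinner ω) (hp0 ω)
    _ = pr p (fun ω => S ω x = S ω y) + C := by
        simp only [mul_add, Finset.sum_add_distrib, ← Finset.sum_mul, hp1, one_mul,
          pr_eq_sum_mul]
    _ = ∑ k ∈ Finset.Icc m n, agreementWeight (lsbCoords n k) k x y := by
        rw [pr_rStep_eq hmn (hpair m le_rfl hmn) hxy, ← hIcc, Finset.sum_insert hm]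
termination_by n + 1 - m

end Collision

section Signs

noncomputable def boolSign (b : Bool) : ℝ := if b then -1 else 1

lemma boolSign_not (b : Bool) : boolSign (!b) = -boolSign b := by
  cases b <;> simp [boolSign]

lemma boolSign_mul_four_le_one (a b c d : Bool) :
    boolSign a * boolSign b * boolSign c * boolSign d ≤ 1 := by
  cases a <;> cases b <;> cases c <;> cases d <;> norm_num [boolSign]

lemma sum_boolSign_mul_eq_zero {κ : Type*} [Fintype κ] [DecidableEq κ] (u : κ)
    (Ψ : (κ → Bool) → ℝ) (hΨ : ∀ b c, Ψ (Function.update b u c) = Ψ b) :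
    ∑ b : κ → Bool, boolSign (b u) * Ψ b = 0 := by
  -- Flipping bit `u` is an involution that negates every summand.
  have hflip : Function.Involutive fun b : κ → Bool => Function.update b u (!b u) :=
    fun b => by simp
  have hsum := Fintype.sum_bijective _ hflip.bijective
    (fun b => boolSign (Function.update b u (!b u) u) * Ψ (Function.update b u (!b u)))
    (fun b => boolSign (b u) * Ψ b) fun b => rfl
  simp only [Function.update_self, boolSign_not, hΨ, neg_mul, Finset.sum_neg_distrib] at hsum
  linarith

variable {Ω : Type*} [Fintype Ω] {p : Ω → ℝ}

lemma sum_mul_boolSign_mul_eq_zero_of_uniform {κ : Type*} [Fintype κ] [DecidableEq κ]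
    {V : Ω → κ → Bool} {c : ℝ} (hV : ∀ b, pr p (fun ω => V ω = b) = c) (u : κ)
    (Ψ : (κ → Bool) → ℝ) (hΨ : ∀ b c, Ψ (Function.update b u c) = Ψ b) :
    ∑ ω, p ω * (boolSign (V ω u) * Ψ (V ω)) = 0 := by
  rw [sum_mul_comp_eq_sum_pr V fun b => boolSign (b u) * Ψ b]
  simp only [hV, ← Finset.mul_sum, sum_boolSign_mul_eq_zero u Ψ hΨ, mul_zero]

lemma sum_mul_boolSign_four_eq_zero {α : Type*} [DecidableEq α] {H : Ω → α → Bool}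
    (hH : ∀ (s : Finset α) (b : α → Bool), s.card ≤ 4 →
      pr p (fun ω => ∀ u ∈ s, H ω u = b u) = ((1 : ℝ) / 2) ^ s.card)
    {u₁ u₂ u₃ u₄ : α} (h₂ : u₁ ≠ u₂) (h₃ : u₁ ≠ u₃) (h₄ : u₁ ≠ u₄) :
    ∑ ω, p ω * (boolSign (H ω u₁) * boolSign (H ω u₂) * boolSign (H ω u₃) * boolSign (H ω u₄))
      = 0 := by
  -- `H` is uniform on `s`, and only the first factor depends on the coordinate `u₁`.
  set s : Finset α := {u₁, u₂, u₃, u₄}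
  have hmem : ∀ {u}, u = u₁ ∨ u = u₂ ∨ u = u₃ ∨ u = u₄ → u ∈ s := by simp [s]
  let V : Ω → s → Bool := fun ω t => H ω t
  have hV : ∀ b, pr p (fun ω => V ω = b) = ((1 : ℝ) / 2) ^ s.card := by
    intro b
    rw [← hH s (fun u => if h : u ∈ s then b ⟨u, h⟩ else false) (Finset.card_le_four)]
    refine pr_congr fun ω => ⟨fun hω u hu => by simp [hu, ← hω, V], fun hω => ?_⟩
    funext t
    simpa using hω t t.2
  have key := sum_mul_boolSign_mul_eq_zero_of_uniform hV ⟨u₁, hmem (by simp)⟩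
    (fun b => boolSign (b ⟨u₂, hmem (by simp)⟩) * boolSign (b ⟨u₃, hmem (by simp)⟩)
      * boolSign (b ⟨u₄, hmem (by simp)⟩))
    (fun b c => by simp [Function.update_of_ne, Subtype.ext_iff, h₂.symm, h₃.symm, h₄.symm])
  simpa only [V, mul_assoc] using key

lemma sum_mul_boolSign_comp_le (hp0 : ∀ ω, 0 ≤ p ω) (hp1 : ∑ ω, p ω = 1)
    {α α' : Type*} [Fintype α] [DecidableEq α] [Fintype α'] [DecidableEq α']
    {R : Ω → α → α'} {H : Ω → α' → Bool} (hRH : IndepFunPr p R H)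
    (hH : ∀ (s : Finset α') (b : α' → Bool), s.card ≤ 4 →
      pr p (fun ω => ∀ u ∈ s, H ω u = b u) = ((1 : ℝ) / 2) ^ s.card)
    (x₁ x₂ x₃ x₄ : α) :
    ∑ ω, p ω * (boolSign (H ω (R ω x₁)) * boolSign (H ω (R ω x₂)) * boolSign (H ω (R ω x₃))
        * boolSign (H ω (R ω x₄)))
      ≤ pr p (fun ω => R ω x₁ = R ω x₂) + pr p (fun ω => R ω x₁ = R ω x₃)
        + pr p (fun ω => R ω x₁ = R ω x₄) := by
  have hinner : ∀ r : α → α', ∑ ω', p ω' * (boolSign (H ω' (r x₁)) * boolSign (H ω' (r x₂))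
        * boolSign (H ω' (r x₃)) * boolSign (H ω' (r x₄)))
      ≤ (if r x₁ = r x₂ then 1 else 0) + (if r x₁ = r x₃ then 1 else 0)
        + (if r x₁ = r x₄ then 1 else 0) := by
    intro r
    by_cases hcol : r x₁ = r x₂ ∨ r x₁ = r x₃ ∨ r x₁ = r x₄
    · refine (sum_mul_le_one hp0 hp1 fun ω => boolSign_mul_four_le_one _ _ _ _).trans ?_
      rcases hcol with h | h | h <;> simp only [h, if_true] <;> split_ifs <;> norm_num
    · push Not at hcol
      rw [sum_mul_boolSign_four_eq_zero hH hcol.1 hcol.2.1 hcol.2.2]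
      positivity
  calc _ = ∑ ω, p ω * ∑ ω', p ω' * (boolSign (H ω' (R ω x₁)) * boolSign (H ω' (R ω x₂))
          * boolSign (H ω' (R ω x₃)) * boolSign (H ω' (R ω x₄))) :=
        hRH.sum_mul_eq fun r h => boolSign (h (r x₁)) * boolSign (h (r x₂))
          * boolSign (h (r x₃)) * boolSign (h (r x₄))
    _ ≤ ∑ ω, p ω * ((if R ω x₁ = R ω x₂ then 1 else 0) + (if R ω x₁ = R ω x₃ then 1 else 0)
          + (if R ω x₁ = R ω x₄ then 1 else 0)) :=
        Finset.sum_le_sum fun ω _ => mul_le_mul_of_nonneg_left (hinner (R ω)) (hp0 ω)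
    _ = _ := by simp only [mul_add, Finset.sum_add_distrib, ← pr_eq_sum_mul]

end Signs

section Counting

variable {σ : Type*} [DecidableEq σ]

lemma eqOn_piecewise_iff (X S : Finset σ) (x y : σ → Bool) :
    Set.EqOn x (X.piecewise y x) ↑S ↔ Set.EqOn x y ↑(X ∩ S) := by
  constructor
  · intro h t ht
    rw [Finset.coe_inter] at ht
    simpa [Finset.piecewise_eq_of_mem _ _ _ ht.1] using h ht.2
  · intro h t ht
    by_cases hX : t ∈ X
    · rw [Finset.piecewise_eq_of_mem _ _ _ hX]
      exact h (by simp_all)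
    · rw [Finset.piecewise_eq_of_notMem _ _ _ hX]

lemma agreementWeight_piecewise (X S : Finset σ) (k : ℕ) (x y : σ → Bool) :
    agreementWeight S k x (X.piecewise y x) = agreementWeight (X ∩ S) k x y := by
  simp only [agreementWeight, eqOn_piecewise_iff]

variable [Fintype σ]

lemma eq_piecewise_iff (X : Finset σ) (x y : σ → Bool) :
    x = X.piecewise y x ↔ Set.EqOn x y ↑X := by
  rw [← Set.eqOn_univ, ← Finset.coe_univ, eqOn_piecewise_iff, Finset.inter_univ]

lemma sum_ite_eqOn (S : Finset σ) (x : σ → Bool) :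
    ∑ y : σ → Bool, (if Set.EqOn x y ↑S then (1 : ℝ) else 0)
      = 2 ^ (Fintype.card σ - S.card) := by
  have hprod : ∀ y : σ → Bool, (if Set.EqOn x y ↑S then (1 : ℝ) else 0)
      = ∏ t, if t ∈ S then (if x t = y t then 1 else 0) else 1 := by
    intro y
    rw [Fintype.prod_ite_mem, Finset.prod_boole]
    simp [Set.EqOn]
  have hfactor : ∀ t, ∑ b : Bool, (if t ∈ S then (if x t = b then (1 : ℝ) else 0) else 1)
      = if t ∈ S then 1 else 2 := by
    intro t
    split_ifs <;> cases x t <;> norm_num [Fintype.sum_bool]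
  simp only [hprod]
  rw [← Fintype.prod_sum fun t b => if t ∈ S then (if x t = b then (1 : ℝ) else 0) else 1,
    Finset.prod_congr rfl fun t _ => hfactor t, Finset.prod_ite,
    Finset.prod_const_one, Finset.prod_const, one_mul, Finset.filter_notMem_eq_sdiff,
    Finset.card_sdiff]
  simp

lemma sum_sum_agreementWeight_le (S : Finset σ) {a k : ℕ} (h : a ≤ S.card + k) :
    ∑ x, ∑ y, agreementWeight S k x y ≤ 2 ^ (2 * Fintype.card σ - a) := by
  have hS := S.card_le_univ
  calc ∑ x, ∑ y, agreementWeight S k x y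
      = ∑ x : σ → Bool, 1 / 2 ^ k * ∑ y : σ → Bool, (if Set.EqOn x y ↑S then (1 : ℝ) else 0) := by
        simp only [agreementWeight, Finset.mul_sum, mul_boole]
    _ = 2 ^ (Fintype.card σ + (Fintype.card σ - S.card)) / 2 ^ k := by
        simp only [sum_ite_eqOn, Finset.sum_const, Finset.card_univ, Fintype.card_fun,
          Fintype.card_bool, nsmul_eq_mul]
        push_cast
        ring
    _ ≤ 2 ^ (2 * Fintype.card σ - a + k) / 2 ^ k := by
        gcongr ?_ / _
        exact pow_le_pow_right₀ (by norm_num) (by omega)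
    _ = 2 ^ (2 * Fintype.card σ - a) := by
        rw [pow_add, mul_div_cancel_right₀ _ (by positivity)]

end Counting

section Cut

variable {n : ℕ}

lemma frobSq_mul_transpose {a b : Type*} [Fintype a] [Fintype b] (M : Matrix a b ℝ) :
    frobSq (M * Mᵀ) = ∑ i, ∑ i', ∑ j, ∑ j', M i j * M i' j * (M i j' * M i' j') := by
  simp only [frobSq, Matrix.mul_apply, Matrix.transpose_apply, sq, Finset.sum_mul_sum]

lemma mergeCut_eq_symm (X : Finset (Fin n)) (i : {t : Fin n // t ∈ X} → Bool)
    (j : {t : Fin n // t ∉ X} → Bool) :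
    mergeCut X i j = (Equiv.piEquivPiSubtypeProd (· ∈ X) fun _ => Bool).symm (i, j) := rfl

lemma piecewise_mergeCut (X : Finset (Fin n)) (i i' : {t : Fin n // t ∈ X} → Bool)
    (j j' : {t : Fin n // t ∉ X} → Bool) :
    X.piecewise (mergeCut X i j) (mergeCut X i' j') = mergeCut X i j' := by
  funext t
  by_cases ht : t ∈ X <;> simp [mergeCut, ht]

lemma frobSq_of_mergeCut (X : Finset (Fin n)) (f : (Fin n → Bool) → ℝ)
    (M : Matrix ({t : Fin n // t ∈ X} → Bool) ({t : Fin n // t ∉ X} → Bool) ℝ)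
    (hM : ∀ i j, M i j = f (mergeCut X i j)) :
    frobSq (M * Mᵀ)
      = ∑ x, ∑ y, f x * f (X.piecewise y x) * f (X.piecewise x y) * f y := by
  let e := (Equiv.piEquivPiSubtypeProd (· ∈ X) fun _ => Bool).symm
  rw [frobSq_mul_transpose, ← e.sum_comp]
  simp only [← e.sum_comp, Fintype.sum_prod_type, e, ← mergeCut_eq_symm, piecewise_mergeCut, hM]
  refine Finset.sum_congr rfl fun i _ => ?_
  rw [Finset.sum_comm]
  refine Finset.sum_congr rfl fun j _ => Finset.sum_congr rfl fun i' _ =>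
    Finset.sum_congr rfl fun j' _ => by ring

end Cut

section Construction

variable {n : ℕ}

/-- For `x = i ‖_X j` and `y = i' ‖_X j'`: the first two terms cover `i = i'` and `j = j'`, the
sum bounds the probabilities that `r x` collides with `r (i' ‖_X j)`, `r (i ‖_X j')` and `r y`. -/
noncomputable def cutPairBound (X : Finset (Fin n)) (m₀ : ℕ) (x y : Fin n → Bool) : ℝ :=
  agreementWeight X 0 x y + agreementWeight Xᶜ 0 x y
    + ∑ k ∈ Finset.Icc m₀ n, (agreementWeight (X ∩ lsbCoords n k) k x y
      + agreementWeight (Xᶜ ∩ lsbCoords n k) k x y + agreementWeight (lsbCoords n k) k x y)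

lemma sum_mul_boolSign_cut_le {Ω : Type*} [Fintype Ω] {p : Ω → ℝ}
    (hp0 : ∀ ω, 0 ≤ p ω) (hp1 : ∑ ω, p ω = 1) {m₀ : ℕ}
    {R : Ω → (Fin n → Bool) → Fin n → Bool} {H : Ω → (Fin n → Bool) → Bool}
    (hRH : IndepFunPr p R H)
    (hH : ∀ (s : Finset (Fin n → Bool)) (b : (Fin n → Bool) → Bool), s.card ≤ 4 →
      pr p (fun ω => ∀ u ∈ s, H ω u = b u) = ((1 : ℝ) / 2) ^ s.card)
    (hcoll : ∀ x z, x ≠ z → pr p (fun ω => R ω x = R ω z)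
      ≤ ∑ k ∈ Finset.Icc m₀ n, agreementWeight (lsbCoords n k) k x z)
    (X : Finset (Fin n)) (x y : Fin n → Bool) :
    ∑ ω, p ω * (boolSign (H ω (R ω x)) * boolSign (H ω (R ω (X.piecewise y x)))
        * boolSign (H ω (R ω (X.piecewise x y))) * boolSign (H ω (R ω y)))
      ≤ cutPairBound X m₀ x y := by
  have hX := agreementWeight_nonneg X 0 x y
  have hXc := agreementWeight_nonneg Xᶜ 0 x y
  by_cases hdiag : Set.EqOn x y ↑X ∨ Set.EqOn x y ↑Xᶜ
  · have hrounds : 0 ≤ ∑ k ∈ Finset.Icc m₀ n, (agreementWeight (X ∩ lsbCoords n k) k x y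
        + agreementWeight (Xᶜ ∩ lsbCoords n k) k x y + agreementWeight (lsbCoords n k) k x y) :=
      Finset.sum_nonneg fun k _ => by
        linarith [agreementWeight_nonneg (X ∩ lsbCoords n k) k x y,
          agreementWeight_nonneg (Xᶜ ∩ lsbCoords n k) k x y,
          agreementWeight_nonneg (lsbCoords n k) k x y]
    have hone : 1 ≤ agreementWeight X 0 x y + agreementWeight Xᶜ 0 x y := by
      rcases hdiag with h | h
      · have : agreementWeight X 0 x y = 1 := by simp only [agreementWeight, if_pos h]; norm_num
        linarith
      · have : agreementWeight Xᶜ 0 x y = 1 := by simp only [agreementWeight, if_pos h]; norm_num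
        linarith
    refine (sum_mul_le_one hp0 hp1 fun ω => boolSign_mul_four_le_one _ _ _ _).trans ?_
    unfold cutPairBound
    linarith
  · push Not at hdiag
    have h₂ : x ≠ X.piecewise y x := mt (eq_piecewise_iff X x y).1 hdiag.1
    have h₃ : x ≠ X.piecewise x y := by
      rw [← Finset.piecewise_compl]
      exact mt (eq_piecewise_iff Xᶜ x y).1 hdiag.2
    have h₄ : x ≠ y := fun h => hdiag.1 (h ▸ Set.eqOn_refl _ _)
    calc _ ≤ _ := sum_mul_boolSign_comp_le hp0 hp1 hRH hH x (X.piecewise y x)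
          (X.piecewise x y) y
      _ ≤ _ := add_le_add (add_le_add (hcoll _ _ h₂) (hcoll _ _ h₃)) (hcoll _ _ h₄)
      _ = ∑ k ∈ Finset.Icc m₀ n, (agreementWeight (X ∩ lsbCoords n k) k x y
          + agreementWeight (Xᶜ ∩ lsbCoords n k) k x y
          + agreementWeight (lsbCoords n k) k x y) := by
        rw [← Finset.piecewise_compl X y x]
        simp only [agreementWeight_piecewise, Finset.sum_add_distrib]
      _ ≤ cutPairBound X m₀ x y := by
        unfold cutPairBound
        linarith

lemma sum_sum_cutPairBound_le {m₀ : ℕ} (hm₀ : 1 ≤ m₀) (hn : 1 ≤ n) (X : Finset (Fin n))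
    (hX : 2 * X.card ≤ n) :
    ∑ x, ∑ y, cutPairBound X m₀ x y ≤ 5 * n * 2 ^ (2 * n - X.card) := by
  set B : ℝ := 2 ^ (2 * n - X.card)
  have hw : ∀ (S : Finset (Fin n)) (k : ℕ), X.card ≤ S.card + k →
      ∑ x, ∑ y, agreementWeight S k x y ≤ B :=
    fun S k h => by simpa using sum_sum_agreementWeight_le S h
  have hXc : X.card ≤ Xᶜ.card := by
    rw [Finset.card_compl, Fintype.card_fin]
    omega
  have hround : ∀ k, ∑ x, ∑ y, (agreementWeight (X ∩ lsbCoords n k) k x y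
      + agreementWeight (Xᶜ ∩ lsbCoords n k) k x y + agreementWeight (lsbCoords n k) k x y)
      ≤ 3 * B := by
    intro k
    have hlsb := card_le_card_inter_lsbCoords_add (Finset.univ : Finset (Fin n)) k
    rw [Finset.univ_inter, Finset.card_univ, Fintype.card_fin] at hlsb
    simp only [Finset.sum_add_distrib]
    linarith [hw _ k (card_le_card_inter_lsbCoords_add X k),
      hw _ k (hXc.trans (card_le_card_inter_lsbCoords_add Xᶜ k)), hw (lsbCoords n k) k (by omega)]
  have hcount : ((Finset.Icc m₀ n).card : ℝ) ≤ n := by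
    rw [Nat.card_Icc]
    exact_mod_cast (by omega : n + 1 - m₀ ≤ n)
  calc ∑ x, ∑ y, cutPairBound X m₀ x y
      = ∑ x, ∑ y, agreementWeight X 0 x y + ∑ x, ∑ y, agreementWeight Xᶜ 0 x y
        + ∑ k ∈ Finset.Icc m₀ n, ∑ x, ∑ y, (agreementWeight (X ∩ lsbCoords n k) k x y
          + agreementWeight (Xᶜ ∩ lsbCoords n k) k x y
          + agreementWeight (lsbCoords n k) k x y) := by
        simp only [cutPairBound, Finset.sum_add_distrib]
        rw [Finset.sum_comm]
        simp only [Finset.sum_comm (s := Finset.Icc m₀ n)]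
    _ ≤ B + B + ∑ _k ∈ Finset.Icc m₀ n, 3 * B :=
        add_le_add (add_le_add (hw X 0 (by simp)) (hw Xᶜ 0 (by simpa using hXc)))
          (Finset.sum_le_sum fun k _ => hround k)
    _ ≤ 5 * n * B := by
        have hn' : (1 : ℝ) ≤ n := by exact_mod_cast hn
        have hB : 0 ≤ B := by positivity
        rw [Finset.sum_const, nsmul_eq_mul]
        nlinarith

end Construction

theorem statement1_general
    (n m₀ : ℕ) (hn : 1 ≤ n) (hm₀ : 1 ≤ m₀)
    (Ω : Type*) [Fintype Ω] (p : Ω → ℝ)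
    (hp0 : ∀ ω, 0 ≤ p ω) (hp1 : ∑ ω, p ω = 1)
    (F : ∀ m : ℕ, Ω → (Fin m → Bool) → (Fin m → Bool))
    (Hf : Ω → (Fin n → Bool) → Bool)
    -- each `F m` (for `m₀ ≤ m ≤ n`) is a pairwise independent random function
    (hFpair : ∀ m, m₀ ≤ m → m ≤ n → ∀ x y : Fin m → Bool, x ≠ y →
      ∀ a b : Fin m → Bool,
        pr p (fun ω => F m ω x = a ∧ F m ω y = b) = ((1 : ℝ) / 2 ^ m) ^ 2)
    -- `Hf` comes from a 4-wise independent family with a uniformly random key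
    (hH4 : ∀ (s : Finset (Fin n → Bool)) (b : (Fin n → Bool) → Bool), s.card ≤ 4 →
      pr p (fun ω => ∀ u ∈ s, Hf ω u = b u) = ((1 : ℝ) / 2) ^ s.card)
    -- `F_{m₀}, …, F_n, Hf` are mutually independent
    (hInd : ∀ (g : ∀ m : ℕ, (Fin m → Bool) → (Fin m → Bool))
        (hh : (Fin n → Bool) → Bool),
      pr p (fun ω => (∀ m ∈ Finset.Icc m₀ n, F m ω = g m) ∧ Hf ω = hh)
        = (∏ m ∈ Finset.Icc m₀ n, pr p (fun ω => F m ω = g m))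
            * pr p (fun ω => Hf ω = hh))
    (X : Finset (Fin n)) (hX2 : 2 * X.card ≤ n)
    (T : Ω → Matrix ({t : Fin n // t ∈ X} → Bool) ({t : Fin n // t ∉ X} → Bool) ℝ)
    (hT : ∀ ω i j,
      T ω i j =
        if Hf ω (rRec n (fun m => F m ω) m₀ (mergeCut X i j)) then (-1 : ℝ) else 1) :
    ∑ ω, p ω * frobSq (T ω * (T ω)ᵀ) ≤ 5 * (n : ℝ) * 2 ^ (2 * n - X.card) := by
  have hFind : iIndepPr p F (Finset.Icc m₀ n) := fun g => pr_eq_of_pr_and_eq_mul hp1 (hInd g)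
  have hRH : IndepFunPr p (fun ω => rRec n (fun m => F m ω) m₀) Hf :=
    indepFunPr_of_forall_pr_and (fun g z => by rw [hInd, hFind g]) fun ω ω' h => rRec_congr h
  have hexpand := fun ω => frobSq_of_mergeCut X
    (fun z => boolSign (Hf ω (rRec n (fun m => F m ω) m₀ z))) (T ω) (hT ω)
  calc ∑ ω, p ω * frobSq (T ω * (T ω)ᵀ)
      = ∑ x, ∑ y, ∑ ω, p ω * (boolSign (Hf ω (rRec n (fun m => F m ω) m₀ x))
          * boolSign (Hf ω (rRec n (fun m => F m ω) m₀ (X.piecewise y x)))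
          * boolSign (Hf ω (rRec n (fun m => F m ω) m₀ (X.piecewise x y)))
          * boolSign (Hf ω (rRec n (fun m => F m ω) m₀ y))) := by
        simp only [hexpand, Finset.mul_sum]
        rw [Finset.sum_comm]
        exact Finset.sum_congr rfl fun x _ => Finset.sum_comm
    _ ≤ ∑ x, ∑ y, cutPairBound X m₀ x y :=
        Finset.sum_le_sum fun x _ => Finset.sum_le_sum fun y _ =>
          sum_mul_boolSign_cut_le hp0 hp1 hRH hH4
            (fun x z hxz => pr_rRec_eq_le hp0 hp1 hFpair hFind hxz) X x y
    _ ≤ 5 * n * 2 ^ (2 * n - X.card) := sum_sum_cutPairBound_le hm₀ hn X hX2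

/-- For the multi-cut construction with pairwise independent lossy rounds
`F_{m₀}, …, F_n` (mutually independent) composed with a 4-wise independent phase function,
the expected squared Frobenius norm of `T Tᵀ` across any cut `X` with `1 ≤ |X| ≤ n/2`
is at most `5 n 2^{2n - |X|}`. -/
theorem statement1
    (n m₀ : ℕ) (hn : 1 ≤ n) (hm₀ : 1 ≤ m₀) (hm₀n : m₀ ≤ n)
    (Ω : Type*) [Fintype Ω] (p : Ω → ℝ)
    (hp0 : ∀ ω, 0 ≤ p ω) (hp1 : ∑ ω, p ω = 1)
    (F : ∀ m : ℕ, Ω → (Fin m → Bool) → (Fin m → Bool))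
    (Hf : Ω → (Fin n → Bool) → Bool)
    -- each `F m` (for `m₀ ≤ m ≤ n`) is a pairwise independent random function
    (hFpair : ∀ m, m₀ ≤ m → m ≤ n → ∀ x y : Fin m → Bool, x ≠ y →
      ∀ a b : Fin m → Bool,
        pr p (fun ω => F m ω x = a ∧ F m ω y = b) = ((1 : ℝ) / 2 ^ m) ^ 2)
    -- `Hf` comes from a 4-wise independent family with a uniformly random key
    (hH4 : ∀ (s : Finset (Fin n → Bool)) (b : (Fin n → Bool) → Bool), s.card ≤ 4 →
      pr p (fun ω => ∀ u ∈ s, Hf ω u = b u) = ((1 : ℝ) / 2) ^ s.card)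
    -- `F_{m₀}, …, F_n, Hf` are mutually independent
    (hInd : ∀ (g : ∀ m : ℕ, (Fin m → Bool) → (Fin m → Bool))
        (hh : (Fin n → Bool) → Bool),
      pr p (fun ω => (∀ m ∈ Finset.Icc m₀ n, F m ω = g m) ∧ Hf ω = hh)
        = (∏ m ∈ Finset.Icc m₀ n, pr p (fun ω => F m ω = g m))
            * pr p (fun ω => Hf ω = hh))
    (X : Finset (Fin n)) (hX1 : 1 ≤ X.card) (hX2 : 2 * X.card ≤ n)
    (T : Ω → Matrix ({t : Fin n // t ∈ X} → Bool) ({t : Fin n // t ∉ X} → Bool) ℝ)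
    (hT : ∀ ω i j,
      T ω i j =
        if Hf ω (rRec n (fun m => F m ω) m₀ (mergeCut X i j)) then (-1 : ℝ) else 1) :
    ∑ ω, p ω * frobSq (T ω * (T ω)ᵀ) ≤ 5 * (n : ℝ) * 2 ^ (2 * n - X.card) :=
  statement1_general n m₀ hn hm₀ Ω p hp0 hp1 F Hf hFpair hH4 hInd X hX2 T hT
end

section
/- Let p = 16, let q = 16c for an integer c ≥ 1, and let m ≥ 1. For a uniformly random m × m matrix A over Z/qZ, the probability that the map x ↦ ⌊A·x⌉_p from {0,1}^m (binary vectors viewed as 0/1 vectors over Z/qZ) to (Z/pZ)^m is injective is at least 1 − 2^{1−2m}. -/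
/-!
Fix `x ≠ y` in `{0,1}^m` and a coordinate `j` with `x j = 1`, `y j = 0`. With `q = p c`, adding
`k c` to the `j`-th entry of a row `r` moves `⌊r ⬝ x⌉_p` up by exactly `k` and leaves `r ⬝ y` alone,
so the `p` translates of the set of rows with `⌊r ⬝ x⌉_p = ⌊r ⬝ y⌉_p` are pairwise disjoint: at most
a `1/p` fraction of rows make `x` and `y` collide. The rows of `A` are independent, so `x` and `y`
collide under `A` with probability at most `p^{-n}`, and a union bound over the fewer than `4^m`
pairs `(x, y)` leaves the non-injective matrices a fraction at most `4^m / p^n`; for `p = 16` and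
`n = m` this is `4^{-m}`.
-/

open scoped BigOperators Classical
open Matrix

/-- The rounding map `⌊·⌉_p : Z/qZ → Z/pZ`, sending `x` to `⌊x̄ · p / q⌋` where
`x̄ ∈ {0, …, q-1}` is the standard representative of `x`. -/
def roundTo (q p : ℕ) (x : ZMod q) : ZMod p := ((x.val * p) / q : ℕ)

def binVec (q : ℕ) {m : ℕ} (x : Fin m → Bool) : Fin m → ZMod q :=
  fun j => if x j then 1 else 0

section Rounding

variable {p c : ℕ}

lemma roundTo_mul_eq_div (hp : 0 < p) (u : ZMod (p * c)) :
    roundTo (p * c) p u = ((u.val / c : ℕ) : ZMod p) := by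
  rw [roundTo, mul_comm u.val, Nat.mul_div_mul_left _ _ hp]

lemma roundTo_add_natCast_mul [NeZero (p * c)] (u : ZMod (p * c)) {k : ℕ} (hk : k < p) :
    roundTo (p * c) p (u + ((k * c : ℕ) : ZMod (p * c))) = roundTo (p * c) p u + k := by
  have hc : 0 < c := Nat.pos_of_ne_zero (right_ne_zero_of_mul (NeZero.ne (p * c)))
  have hp : 0 < p := by omega
  have hval : (u + ((k * c : ℕ) : ZMod (p * c))).val / c = (u.val / c + k) % p := by
    rw [ZMod.val_add, ZMod.val_natCast, Nat.mod_eq_of_lt ((Nat.mul_lt_mul_right hc).mpr hk),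
      Nat.mod_mul_left_div_self, Nat.add_mul_div_right _ _ hc]
  rw [roundTo_mul_eq_div hp, roundTo_mul_eq_div hp, hval, ZMod.natCast_mod, Nat.cast_add]

end Rounding

lemma card_filter_forall_row_mem {ι n α : Type*} [Fintype ι] [DecidableEq ι] [Fintype n]
    [DecidableEq n] [Fintype α] (s : Finset (n → α)) :
    (Finset.univ.filter fun A : Matrix ι n α => ∀ i, A i ∈ s).card = s.card ^ Fintype.card ι := by
  have : (Finset.univ.filter fun A : Matrix ι n α => ∀ i, A i ∈ s) = Fintype.piFinset fun _ => s :=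
    Finset.ext fun A => by
      simp only [Finset.mem_filter, Finset.mem_univ, true_and, Iff.comm (a := ∀ _, _)]
      exact Fintype.mem_piFinset (δ := fun _ : ι => n → α) (f := A)
  rw [this]
  exact (Fintype.card_piFinset _).trans (Finset.prod_const _)

def RoundingInjective (q p : ℕ) {n m : ℕ} (A : Matrix (Fin n) (Fin m) (ZMod q)) : Prop :=
  Function.Injective fun x : Fin m → Bool => fun i => roundTo q p (A.mulVec (binVec q x) i)

-- the `Fintype` decision procedure, so that filtering by `RoundingInjective` agrees with filtering
-- by the unfolded `Function.Injective` predicate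
instance (q p : ℕ) {n m : ℕ} : DecidablePred (RoundingInjective q p (n := n) (m := m)) :=
  fun _ => inferInstanceAs (Decidable (Function.Injective _))

def roundCollisions (q p : ℕ) [NeZero q] {m : ℕ} (x y : Fin m → Bool) : Finset (Fin m → ZMod q) :=
  Finset.univ.filter fun r => roundTo q p (r ⬝ᵥ binVec q x) = roundTo q p (r ⬝ᵥ binVec q y)

section Collisions

variable {p c n m : ℕ} [NeZero (p * c)]

lemma card_roundCollisions_mul_le {x y : Fin m → Bool} {j : Fin m}
    (hx : x j = true) (hy : y j = false) :
    (roundCollisions (p * c) p x y).card * p ≤ (p * c) ^ m := by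
  set T := roundCollisions (p * c) p x y
  let shift : (Fin m → ZMod (p * c)) × Fin p → Fin m → ZMod (p * c) :=
    fun rk => rk.1 + Pi.single j ((rk.2 * c : ℕ) : ZMod (p * c))
  have shift_y (rk) : shift rk ⬝ᵥ binVec (p * c) y = rk.1 ⬝ᵥ binVec (p * c) y := by
    simp [shift, add_dotProduct, single_dotProduct, binVec, hy]
  have round_shift_x (rk) (hr : rk.1 ∈ T) :
      roundTo (p * c) p (shift rk ⬝ᵥ binVec (p * c) x)
        = roundTo (p * c) p (shift rk ⬝ᵥ binVec (p * c) y) + rk.2 := by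
    have hdot : shift rk ⬝ᵥ binVec (p * c) x
        = rk.1 ⬝ᵥ binVec (p * c) x + ((rk.2 * c : ℕ) : ZMod (p * c)) := by
      simp [shift, add_dotProduct, single_dotProduct, binVec, hx]
    rw [hdot, roundTo_add_natCast_mul _ rk.2.isLt, (Finset.mem_filter.mp hr).2, shift_y]
  have hinj : Set.InjOn shift ↑(T ×ˢ (Finset.univ : Finset (Fin p))) := by
    rintro ⟨r, k⟩ hrk ⟨r', k'⟩ hrk' heq
    simp only [Finset.coe_product, Set.mem_prod, Finset.mem_coe] at hrk hrk'
    have hk : (k : ZMod p) = k' := by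
      have := round_shift_x (r, k) hrk.1
      rwa [heq, round_shift_x (r', k') hrk'.1, add_left_cancel_iff, eq_comm] at this
    have hk : k = k' := Fin.ext <| by
      simpa [ZMod.val_cast_of_lt k.isLt, ZMod.val_cast_of_lt k'.isLt] using congrArg ZMod.val hk
    subst hk
    simpa [shift] using heq
  have := Finset.card_le_card_of_injOn shift (fun _ _ => Finset.mem_univ _) hinj
  simpa [Finset.card_product] using this

lemma card_roundCollisions_mul_le_of_ne {x y : Fin m → Bool} (hxy : x ≠ y) :
    (roundCollisions (p * c) p x y).card * p ≤ (p * c) ^ m := by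
  obtain ⟨j, hj⟩ := Function.ne_iff.mp hxy
  cases hx : x j <;> cases hy : y j <;> simp only [hx, hy, ne_eq, not_true_eq_false] at hj
  · simpa only [roundCollisions, eq_comm] using card_roundCollisions_mul_le (c := c) hy hx
  · exact card_roundCollisions_mul_le hx hy

lemma card_filter_not_roundingInjective_mul_le :
    (Finset.univ.filter fun A : Matrix (Fin n) (Fin m) (ZMod (p * c)) =>
        ¬ RoundingInjective (p * c) p A).card * p ^ n ≤ 4 ^ m * (p * c) ^ (n * m) := by
  set pairs := (Finset.univ : Finset (Fin m → Bool)).offDiag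
  let collide : (Fin m → Bool) × (Fin m → Bool) → Finset (Matrix (Fin n) (Fin m) (ZMod (p * c))) :=
    fun xy => Finset.univ.filter fun A => ∀ i, A i ∈ roundCollisions (p * c) p xy.1 xy.2
  have hbad : (Finset.univ.filter fun A : Matrix (Fin n) (Fin m) (ZMod (p * c)) =>
      ¬ RoundingInjective (p * c) p A) ⊆ pairs.biUnion collide := by
    intro A hA
    obtain ⟨x, y, hfxy, hxy⟩ := Function.not_injective_iff.mp (Finset.mem_filter.mp hA).2
    refine Finset.mem_biUnion.mpr ⟨(x, y), by simpa [pairs] using hxy, ?_⟩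
    simp only [collide, roundCollisions, Finset.mem_filter, Finset.mem_univ, true_and]
    exact congrFun hfxy
  have hcollide (xy) (hxy : xy ∈ pairs) : (collide xy).card * p ^ n ≤ (p * c) ^ (n * m) := by
    have hcard : (collide xy).card = (roundCollisions (p * c) p xy.1 xy.2).card ^ n := by
      convert card_filter_forall_row_mem (ι := Fin n) _
      exact (Fintype.card_fin n).symm
    rw [hcard, ← mul_pow, mul_comm n m, pow_mul]
    exact Nat.pow_le_pow_left
      (card_roundCollisions_mul_le_of_ne (Finset.mem_offDiag.mp hxy).2.2) n
  have hpairs : pairs.card ≤ 4 ^ m := by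
    simp only [pairs, Finset.offDiag_card, Finset.card_univ, Fintype.card_fun, Fintype.card_bool,
      Fintype.card_fin]
    exact (Nat.sub_le _ _).trans (by rw [← mul_pow]; norm_num)
  calc _ ≤ (pairs.biUnion collide).card * p ^ n := Nat.mul_le_mul_right _ (Finset.card_le_card hbad)
    _ ≤ (∑ xy ∈ pairs, (collide xy).card) * p ^ n := Nat.mul_le_mul_right _ Finset.card_biUnion_le
    _ ≤ pairs.card * (p * c) ^ (n * m) := by
      rw [Finset.sum_mul]
      simpa using Finset.sum_le_sum hcollide
    _ ≤ 4 ^ m * (p * c) ^ (n * m) := Nat.mul_le_mul_right _ hpairs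

lemma one_sub_le_card_filter_roundingInjective_div :
    1 - (4 : ℝ) ^ m / p ^ n ≤
      ((Finset.univ.filter fun A : Matrix (Fin n) (Fin m) (ZMod (p * c)) =>
          RoundingInjective (p * c) p A).card : ℝ)
        / Fintype.card (Matrix (Fin n) (Fin m) (ZMod (p * c))) := by
  have hN : Fintype.card (Matrix (Fin n) (Fin m) (ZMod (p * c))) = (p * c) ^ (n * m) := by
    rw [Fintype.card_congr Matrix.of.symm, Fintype.card_fun, Fintype.card_fun, ZMod.card,
      Fintype.card_fin, Fintype.card_fin, pow_mul']
  set G := Finset.univ.filter fun A : Matrix (Fin n) (Fin m) (ZMod (p * c)) =>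
    RoundingInjective (p * c) p A
  set B := Finset.univ.filter fun A : Matrix (Fin n) (Fin m) (ZMod (p * c)) =>
    ¬ RoundingInjective (p * c) p A
  have hsplit : (G.card : ℝ) + B.card = ((p * c) ^ (n * m) : ℕ) := by
    rw [← hN, ← Finset.card_univ]
    exact_mod_cast Finset.card_filter_add_card_filter_not _
  have hbad : (B.card : ℝ) * p ^ n ≤ 4 ^ m * ((p * c) ^ (n * m) : ℕ) := by
    exact_mod_cast card_filter_not_roundingInjective_mul_le
  have hp : (0 : ℝ) < p :=
    Nat.cast_pos.mpr (Nat.pos_of_ne_zero (left_ne_zero_of_mul (NeZero.ne (p * c))))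
  have hNpos : (0 : ℝ) < ((p * c) ^ (n * m) : ℕ) := Nat.cast_pos.mpr (pow_pos (NeZero.pos _) _)
  have hB : (B.card : ℝ) ≤ 4 ^ m * ((p * c) ^ (n * m) : ℕ) / p ^ n :=
    (le_div_iff₀ (by positivity)).mpr hbad
  rw [hN, le_div_iff₀ hNpos, sub_mul, one_mul, div_mul_eq_mul_div]
  linarith

end Collisions

theorem statement11_general (c m q : ℕ) (hq : q = 16 * c) [NeZero q] :
    (1 : ℝ) - 2 / 2 ^ (2 * m) ≤
      ((Finset.univ.filter (fun A : Matrix (Fin m) (Fin m) (ZMod q) =>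
          Function.Injective fun x : Fin m → Bool =>
            fun i : Fin m => roundTo q 16 (A.mulVec (binVec q x) i))).card : ℝ)
        / (Fintype.card (Matrix (Fin m) (Fin m) (ZMod q)) : ℝ) := by
  subst hq
  have h16 : ((16 : ℕ) : ℝ) ^ m = 4 ^ m * 4 ^ m := by rw [← mul_pow]; norm_num
  have h2 : (2 : ℝ) ^ (2 * m) = 4 ^ m := by rw [pow_mul]; norm_num
  have hbound : (1 : ℝ) - 2 / 2 ^ (2 * m) ≤ 1 - 4 ^ m / ((16 : ℕ) : ℝ) ^ m := by
    rw [h16, h2, div_mul_cancel_left₀ (by positivity), inv_eq_one_div]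
    gcongr
    norm_num
  exact hbound.trans one_sub_le_card_filter_roundingInjective_div

/-- With `p = 16` and `q = 16 c`, for a uniformly random `m × m` matrix
`A` over `Z/qZ`, the map `x ↦ ⌊A x⌉_p` from `{0,1}^m` to `(Z/pZ)^m` is injective with
probability at least `1 - 2^{1-2m}`. -/
theorem statement11 (c m q : ℕ) (hc : 1 ≤ c) (hm : 1 ≤ m) (hq : q = 16 * c) [NeZero q] :
    (1 : ℝ) - 2 / 2 ^ (2 * m) ≤
      ((Finset.univ.filter (fun A : Matrix (Fin m) (Fin m) (ZMod q) =>
          Function.Injective fun x : Fin m → Bool =>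
            fun i : Fin m => roundTo q 16 (A.mulVec (binVec q x) i))).card : ℝ)
        / (Fintype.card (Matrix (Fin m) (Fin m) (ZMod q)) : ℝ) :=
  statement11_general c m q hq
end

section
/- Let p = 16, let q = 16c for an integer c ≥ 1, let m, r ≥ 1, and let {h_k : (Z/pZ)^m → (Z/2Z)^m}_{k∈K} be an r-wise independent family. For a uniformly random m × m matrix A over Z/qZ, with probability at least 1 − 2^{1−2m} the family of functions {x ↦ h_k(⌊A·x⌉_p)}_{k∈K} from {0,1}^m to (Z/2Z)^m (with k uniform on K) is r-wise independent. -/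
open scoped BigOperators Classical
open Matrix

/-!
If `x ↦ ⌊A x⌉₁₆` is injective on `{0,1}^m`, the composed family inherits `r`-wise independence
from `{h_k}`: distinct inputs are sent to distinct inputs of `h_k`.

For binary `u ≠ v` pick a coordinate `j` with `u_j = 1`, `v_j = 0`. Translating a row `a` along
`e_j` runs `a ⬝ u` through all of `Z/qZ` while fixing `a ⬝ v`, and every fiber of rounding has
`c = q / 16` elements, so a single row gives `⌊a ⬝ u⌉ = ⌊a ⬝ v⌉` with probability at most `1/16`.
The rows of `A` are independent, so `u` and `v` collide with probability at most `16^{-m}`, and a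
union bound over fewer than `4^m` pairs shows that injectivity fails with probability at most
`4^{-m}`.
-/

open Finset Function

/-- `r`-wise independence for a uniform key, each value being taken with probability `ρ`
(uniformity on `β` is the case `ρ = 1 / |β|`). -/
def IsRWiseIndependent {K α β : Type*} [Fintype K] [DecidableEq β] (h : K → α → β) (r : ℕ)
    (ρ : ℝ) : Prop :=
  ∀ (s : Finset α) (b : α → β), s.card ≤ r →
    ((univ.filter fun k : K => ∀ u ∈ s, h k u = b u).card : ℝ) / (Fintype.card K : ℝ)
      = ρ ^ s.card

theorem IsRWiseIndependent.comp_injective {K α β γ : Type*} [Fintype K] [DecidableEq β]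
    [Nonempty β] {h : K → α → β} {r : ℕ} {ρ : ℝ} (hh : IsRWiseIndependent h r ρ) {g : γ → α}
    (hg : Injective g) : IsRWiseIndependent (fun k => h k ∘ g) r ρ := by
  intro s b hs
  have hcard : (s.image g).card = s.card := card_image_of_injective s hg
  have hfilter : (univ.filter fun k : K => ∀ u ∈ s, h k (g u) = b u)
      = univ.filter fun k : K => ∀ a ∈ s.image g,
          h k a = extend g b (fun _ => Classical.arbitrary β) a := by
    ext k
    simp [hg.extend_apply]
  have himage := hh (s.image g) (extend g b fun _ => Classical.arbitrary β) (hcard.le.trans hs)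
  rwa [hcard, ← hfilter] at himage

section rounding

variable {p q c : ℕ} [NeZero p] [NeZero q]

theorem roundTo_val (hq : q = p * c) (t : ZMod q) : (roundTo q p t).val = t.val / c := by
  have hc : 0 < c := Nat.pos_of_ne_zero (right_ne_zero_of_mul (hq ▸ NeZero.ne q))
  have ht : t.val < p * c := hq ▸ ZMod.val_lt t
  have hdiv : ∀ n, n * p / q = n / c := fun n => by
    rw [hq, mul_comm p c, Nat.mul_div_mul_right _ _ (NeZero.pos p)]
  rw [roundTo, hdiv]
  exact ZMod.val_cast_of_lt ((Nat.div_lt_iff_lt_mul hc).mpr ht)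

theorem card_roundTo_add_eq_le (hq : q = p * c) (s : ZMod q) (w : ZMod p) :
    (univ.filter fun t : ZMod q => roundTo q p (s + t) = w).card ≤ c := by
  calc (univ.filter fun t : ZMod q => roundTo q p (s + t) = w).card
      ≤ (Ico (w.val * c) (w.val * c + c)).card := by
        refine card_le_card_of_injOn (fun t => (s + t).val) (fun t ht => ?_) ?_
        · have hdiv : (s + t).val / c = w.val := by
            rw [← roundTo_val hq]; exact congrArg ZMod.val (by simpa using ht)
          have hc : 0 < c := Nat.pos_of_ne_zero (right_ne_zero_of_mul (hq ▸ NeZero.ne q))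
          have hsplit := Nat.div_add_mod' (s + t).val c
          have hmod := Nat.mod_lt (s + t).val hc
          rw [hdiv] at hsplit
          simp only [coe_Ico, Set.mem_Ico]
          omega
        · intro t _ t' _ htt'
          simpa using ZMod.val_injective q htt'
    _ = c := by simp

end rounding

theorem card_mul_card_le_of_forall_card_translate_le {G T : Type*} [AddGroup G] [Fintype G]
    [Fintype T] (S : Finset G) (f : T → G) {n : ℕ}
    (hn : ∀ a, (univ.filter fun t => a + f t ∈ S).card ≤ n) :
    S.card * Fintype.card T ≤ n * Fintype.card G := by
  have htranslate : ∀ t, (univ.filter fun a => a + f t ∈ S).card = S.card := fun t =>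
    card_nbij' (· + f t) (· - f t) (fun a ha => by simpa using ha)
      (fun a ha => by simpa using ha) (fun a _ => by simp) (fun a _ => by simp)
  rw [mul_comm, mul_comm n]
  exact card_mul_le_card_mul (fun t a => a + f t ∈ S)
    (fun t _ => (htranslate t).ge) (fun a _ => hn a)

section rows

variable {p q c m : ℕ} [NeZero p] [NeZero q]

theorem card_roundTo_dotProduct_eq_le (hq : q = p * c) {x y : Fin m → ZMod q} {j : Fin m}
    (hx : x j = 1) (hy : y j = 0) :
    p * (univ.filter fun a : Fin m → ZMod q =>
      roundTo q p (a ⬝ᵥ x) = roundTo q p (a ⬝ᵥ y)).card ≤ q ^ m := by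
  -- moving `a` along the `j`-th axis shifts `a ⬝ᵥ x` and leaves `a ⬝ᵥ y` fixed
  have hcount := card_mul_card_le_of_forall_card_translate_le
    (univ.filter fun a : Fin m → ZMod q => roundTo q p (a ⬝ᵥ x) = roundTo q p (a ⬝ᵥ y))
    (Pi.single j) (n := c) fun a => by
      simpa [add_dotProduct, single_dotProduct, hx, hy]
        using card_roundTo_add_eq_le hq (a ⬝ᵥ x) (roundTo q p (a ⬝ᵥ y))
  simp only [ZMod.card, Fintype.card_pi, prod_const, card_univ, Fintype.card_fin] at hcount
  refine Nat.le_of_mul_le_mul_right ?_ (NeZero.pos q)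
  calc p * _ * q ≤ p * (c * q ^ m) := by rw [mul_assoc]; exact Nat.mul_le_mul_left p hcount
    _ = q ^ m * q := by rw [hq]; ring

theorem card_roundTo_dotProduct_binVec_eq_le (hq : q = p * c) {u v : Fin m → Bool}
    (huv : u ≠ v) :
    p * (univ.filter fun a : Fin m → ZMod q =>
      roundTo q p (a ⬝ᵥ binVec q u) = roundTo q p (a ⬝ᵥ binVec q v)).card ≤ q ^ m := by
  obtain ⟨j, hj⟩ := Function.ne_iff.mp huv
  cases hu : u j <;> cases hv : v j <;> simp only [hu, hv, ne_eq, not_true_eq_false] at hj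
  · simpa only [eq_comm] using card_roundTo_dotProduct_eq_le hq (x := binVec q v)
      (y := binVec q u) (j := j) (by simp [binVec, hv]) (by simp [binVec, hu])
  · exact card_roundTo_dotProduct_eq_le hq (j := j) (by simp [binVec, hu]) (by simp [binVec, hv])

end rows

def roundMulVec (q p : ℕ) {ι : Type*} [Fintype ι] {m : ℕ} (A : Matrix ι (Fin m) (ZMod q))
    (u : Fin m → Bool) : ι → ZMod p :=
  fun i => roundTo q p ((A *ᵥ binVec q u) i)

theorem card_not_injective_le_sum_offDiag {X γ δ : Type*} [Fintype X] [Fintype γ]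
    [DecidableEq γ] [DecidableEq δ] (F : X → γ → δ) :
    (univ.filter fun x => ¬ Injective (F x)).card
      ≤ ∑ uv ∈ (univ : Finset γ).offDiag, (univ.filter fun x => F x uv.1 = F x uv.2).card := by
  refine (card_le_card fun x hx => ?_).trans card_biUnion_le
  simp only [Injective, not_forall, mem_filter, mem_univ, true_and] at hx
  obtain ⟨u, v, huv, hne⟩ := hx
  exact mem_biUnion.mpr ⟨(u, v), by simpa using hne, by simpa using huv⟩

theorem card_filter_forall_apply {ι α : Type*} [Fintype ι] [DecidableEq ι] [Fintype α]
    (P : α → Prop) [DecidablePred P] :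
    (univ.filter fun f : ι → α => ∀ i, P (f i)).card = (univ.filter P).card ^ Fintype.card ι := by
  have hpi : univ.filter (fun f : ι → α => ∀ i, P (f i))
      = Fintype.piFinset fun _ => univ.filter P := by
    ext f
    simp [Fintype.mem_piFinset]
  rw [hpi, Fintype.card_piFinset, prod_const, card_univ]

theorem one_sub_inv_le_card_filter_div {X : Type*} [Fintype X] [Nonempty X] {P : X → Prop}
    [DecidablePred P] {k : ℝ} (hk : 0 < k)
    (hbad : k * (univ.filter fun x => ¬ P x).card ≤ Fintype.card X) :
    1 - k⁻¹ ≤ ((univ.filter P).card : ℝ) / Fintype.card X := by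
  have hX : (0 : ℝ) < Fintype.card X := by exact_mod_cast Fintype.card_pos
  have hsplit : ((univ.filter P).card : ℝ) + (univ.filter fun x => ¬ P x).card
      = Fintype.card X := by
    exact_mod_cast (card_filter_add_card_filter_not P).trans card_univ
  have hbad' : ((univ.filter fun x => ¬ P x).card : ℝ) ≤ Fintype.card X / k := by
    rw [le_div_iff₀ hk]; linarith
  rw [le_div_iff₀ hX, sub_mul, one_mul, inv_mul_eq_div]
  linarith

section matrices

variable {p q c m : ℕ} [NeZero p] [NeZero q] {ι : Type*} [Fintype ι] [DecidableEq ι]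

theorem card_roundMulVec_eq_le (hq : q = p * c) {u v : Fin m → Bool} (huv : u ≠ v) :
    p ^ Fintype.card ι * (univ.filter fun A : Matrix ι (Fin m) (ZMod q) =>
      roundMulVec q p A u = roundMulVec q p A v).card ≤ (q ^ m) ^ Fintype.card ι := by
  have hcard : (univ.filter fun A : Matrix ι (Fin m) (ZMod q) =>
      roundMulVec q p A u = roundMulVec q p A v).card = (univ.filter fun a : Fin m → ZMod q =>
        roundTo q p (a ⬝ᵥ binVec q u) = roundTo q p (a ⬝ᵥ binVec q v)).card ^ Fintype.card ι := by
    simp only [roundMulVec, funext_iff, mulVec]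
    exact card_filter_forall_apply fun a : Fin m → ZMod q =>
      roundTo q p (a ⬝ᵥ binVec q u) = roundTo q p (a ⬝ᵥ binVec q v)
  rw [hcard, ← mul_pow]
  exact Nat.pow_le_pow_left (card_roundTo_dotProduct_binVec_eq_le hq huv) _

theorem card_not_injective_roundMulVec_le (hq : q = p * c) :
    p ^ Fintype.card ι * (univ.filter fun A : Matrix ι (Fin m) (ZMod q) =>
      ¬ Injective (roundMulVec q p A)).card ≤ 4 ^ m * (q ^ m) ^ Fintype.card ι := by
  have hpairs : ((univ : Finset (Fin m → Bool)).offDiag).card ≤ 4 ^ m := by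
    rw [offDiag_card, card_univ, Fintype.card_pi, prod_const, card_univ, Fintype.card_fin,
      Fintype.card_bool, ← mul_pow]
    exact Nat.sub_le _ _
  calc p ^ Fintype.card ι * _
      ≤ p ^ Fintype.card ι * ∑ uv ∈ (univ : Finset (Fin m → Bool)).offDiag,
          (univ.filter fun A : Matrix ι (Fin m) (ZMod q) =>
            roundMulVec q p A uv.1 = roundMulVec q p A uv.2).card :=
        Nat.mul_le_mul_left _ (card_not_injective_le_sum_offDiag _)
    _ ≤ ∑ _uv ∈ (univ : Finset (Fin m → Bool)).offDiag, (q ^ m) ^ Fintype.card ι := by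
        rw [mul_sum]
        exact sum_le_sum fun uv huv => card_roundMulVec_eq_le hq (mem_offDiag.mp huv).2.2
    _ ≤ 4 ^ m * (q ^ m) ^ Fintype.card ι := by
        rw [sum_const, smul_eq_mul]
        exact Nat.mul_le_mul_right _ hpairs

end matrices

theorem statement12_general (c m q r : ℕ) (hq : q = 16 * c) [NeZero q]
    (K : Type*) [Fintype K]
    (h : K → (Fin m → ZMod 16) → (Fin m → ZMod 2))
    -- `{h_k}` (with a uniform key) is an `r`-wise independent family
    (hK : ∀ (s : Finset (Fin m → ZMod 16)) (b : (Fin m → ZMod 16) → Fin m → ZMod 2),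
      s.card ≤ r →
      ((Finset.univ.filter (fun k : K => ∀ u ∈ s, h k u = b u)).card : ℝ)
          / (Fintype.card K : ℝ)
        = ((1 : ℝ) / 2 ^ m) ^ s.card) :
    (1 : ℝ) - 2 / 2 ^ (2 * m) ≤
      ((Finset.univ.filter (fun A : Matrix (Fin m) (Fin m) (ZMod q) =>
          -- the composed family `x ↦ h_k(⌊A x⌉₁₆)` is `r`-wise independent
          ∀ (s : Finset (Fin m → Bool)) (b : (Fin m → Bool) → Fin m → ZMod 2),
            s.card ≤ r →
            ((Finset.univ.filter (fun k : K =>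
                ∀ u ∈ s,
                  h k (fun i => roundTo q 16 (A.mulVec (binVec q u) i)) = b u)).card : ℝ)
                / (Fintype.card K : ℝ)
              = ((1 : ℝ) / 2 ^ m) ^ s.card)).card : ℝ)
        / (Fintype.card (Matrix (Fin m) (Fin m) (ZMod q)) : ℝ) := by
  have hbad := card_not_injective_roundMulVec_le (ι := Fin m) (m := m) hq
  rw [Fintype.card_fin, show 16 ^ m = 4 ^ m * 4 ^ m by rw [← mul_pow]; rfl, mul_assoc] at hbad
  have hN : (q ^ m) ^ m = Fintype.card (Matrix (Fin m) (Fin m) (ZMod q)) := by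
    change _ = Fintype.card (Fin m → Fin m → ZMod q)
    simp
  calc (1 : ℝ) - 2 / 2 ^ (2 * m) ≤ 1 - ((4 : ℝ) ^ m)⁻¹ := by
        have h4 : (0 : ℝ) < ((4 : ℝ) ^ m)⁻¹ := by positivity
        rw [pow_mul, div_eq_mul_inv]
        norm_num
        linarith
    _ ≤ _ := one_sub_inv_le_card_filter_div (by positivity) <| by
        rw [← hN]; exact_mod_cast Nat.le_of_mul_le_mul_left hbad (by positivity)
    _ ≤ _ := by
      gcongr
      intro hA s b hs
      -- `convert` reconciles the `Decidable` instances chosen for the bounded quantifiers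
      convert (IsRWiseIndependent.comp_injective (h := h) (fun s b hs => by convert hK s b hs) hA)
        s b hs
      rfl

/-- With `p = 16` and `q = 16 c`: if `{h_k : (Z/pZ)^m → (Z/2Z)^m}` is an
`r`-wise independent family, then for a uniformly random `m × m` matrix `A` over `Z/qZ`,
with probability at least `1 - 2^{1-2m}` the composed family
`{x ↦ h_k(⌊A x⌉_p)} : {0,1}^m → (Z/2Z)^m` is `r`-wise independent. -/
theorem statement12 (c m q r : ℕ) (hc : 1 ≤ c) (hm : 1 ≤ m) (hr : 1 ≤ r)
    (hq : q = 16 * c) [NeZero q]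
    (K : Type*) [Fintype K] [Nonempty K]
    (h : K → (Fin m → ZMod 16) → (Fin m → ZMod 2))
    -- `{h_k}` (with a uniform key) is an `r`-wise independent family
    (hK : ∀ (s : Finset (Fin m → ZMod 16)) (b : (Fin m → ZMod 16) → Fin m → ZMod 2),
      s.card ≤ r →
      ((Finset.univ.filter (fun k : K => ∀ u ∈ s, h k u = b u)).card : ℝ)
          / (Fintype.card K : ℝ)
        = ((1 : ℝ) / 2 ^ m) ^ s.card) :
    (1 : ℝ) - 2 / 2 ^ (2 * m) ≤
      ((Finset.univ.filter (fun A : Matrix (Fin m) (Fin m) (ZMod q) =>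
          -- the composed family `x ↦ h_k(⌊A x⌉₁₆)` is `r`-wise independent
          ∀ (s : Finset (Fin m → Bool)) (b : (Fin m → Bool) → Fin m → ZMod 2),
            s.card ≤ r →
            ((Finset.univ.filter (fun k : K =>
                ∀ u ∈ s,
                  h k (fun i => roundTo q 16 (A.mulVec (binVec q u) i)) = b u)).card : ℝ)
                / (Fintype.card K : ℝ)
              = ((1 : ℝ) / 2 ^ m) ^ s.card)).card : ℝ)
        / (Fintype.card (Matrix (Fin m) (Fin m) (ZMod q)) : ℝ) :=
  statement12_general c m q r hq K h hK
end

section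
/- Let q ≥ 2 and ℓ, m ≥ 1 be integers with q^ℓ ≥ 2^m. For a uniformly random ℓ × m matrix A over Z/qZ, the probability that the number of vectors x ∈ {0,1}^m (viewed as 0/1 vectors over Z/qZ) satisfying A·x = 0 exceeds 2^ℓ is at most 2^{1−ℓ}. -/
/-!
First moment method. The zero vector is killed by every `A`, while a nonzero binary vector
has an entry equal to `1`, so `A ↦ A x` is onto `(Z/qZ)^ℓ` and kills exactly a `q^{-ℓ}`
fraction of the matrices. Hence the expected number of binary solutions of `A x = 0` is at
most `1 + 2^m / q^ℓ ≤ 2`, and Markov's inequality bounds the probability that it exceeds `2^ℓ`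
by `2 / 2^ℓ`.
-/

open scoped BigOperators Classical
open Matrix

open Finset

theorem AddMonoidHom.card_ker_mul_card_of_surjective {G H : Type*} [AddGroup G] [AddGroup H]
    (f : G →+ H) (hf : Function.Surjective f) : Nat.card f.ker * Nat.card H = Nat.card G := by
  rw [← AddSubgroup.card_mul_index f.ker, AddSubgroup.index_ker, f.range_eq_top_of_surjective hf,
    AddSubgroup.card_top]

theorem Matrix.card_mulVec_eq_zero_mul_card_pow {ι κ R : Type*} [Fintype ι] [Fintype κ]
    [DecidableEq ι] [DecidableEq κ] [Ring R] [Fintype R] [DecidableEq R] {v : κ → R} {j : κ}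
    (hj : IsUnit (v j)) :
    #{A : Matrix ι κ R | A *ᵥ v = 0} * Fintype.card R ^ Fintype.card ι =
      Fintype.card (Matrix ι κ R) := by
  set f := mulVec.addMonoidHomLeft (m := ι) v
  have hsurj : Function.Surjective f := fun w =>
    ⟨vecMulVec w (Pi.single j ↑hj.unit⁻¹), by
      simp [f, mulVec.addMonoidHomLeft, vecMulVec_mulVec, single_dotProduct]⟩
  have hker : Nat.card f.ker = #{A : Matrix ι κ R | A *ᵥ v = 0} := by
    rw [← Fintype.card_subtype, ← Nat.card_eq_fintype_card]
    rfl
  simpa only [hker, Nat.card_eq_fintype_card, Fintype.card_fun] using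
    f.card_ker_mul_card_of_surjective hsurj

theorem exists_binVec_eq_one (q : ℕ) {m : ℕ} {x : Fin m → Bool} (hx : x ≠ fun _ => false) :
    ∃ j, binVec q x j = 1 := by
  obtain ⟨j, hj⟩ := Function.ne_iff.mp hx
  exact ⟨j, by simp [binVec, hj]⟩

theorem Finset.card_filter_le_mul_le_sum {α : Type*} (s : Finset α) (f : α → ℕ) (t : ℕ) :
    #{a ∈ s | t ≤ f a} * t ≤ ∑ a ∈ s, f a :=
  calc #{a ∈ s | t ≤ f a} * t ≤ ∑ a ∈ s with t ≤ f a, f a := by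
        simpa using card_nsmul_le_sum _ f t (fun a ha => (mem_filter.mp ha).2)
    _ ≤ ∑ a ∈ s, f a := sum_le_sum_of_subset (filter_subset _ s)

theorem sum_card_mulVec_binVec_eq_zero_mul_le (q ℓ m : ℕ) [NeZero q] :
    (∑ A : Matrix (Fin ℓ) (Fin m) (ZMod q), #{x : Fin m → Bool | A *ᵥ binVec q x = 0}) *
        q ^ ℓ ≤ Fintype.card (Matrix (Fin ℓ) (Fin m) (ZMod q)) * (q ^ ℓ + 2 ^ m) := by
  set N := Fintype.card (Matrix (Fin ℓ) (Fin m) (ZMod q))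
  have hterm (x : Fin m → Bool) :
      #{A : Matrix (Fin ℓ) (Fin m) (ZMod q) | A *ᵥ binVec q x = 0} * q ^ ℓ
        ≤ (if x = fun _ => false then N * q ^ ℓ else 0) + N := by
    split_ifs with hx
    · exact le_add_right (Nat.mul_le_mul_right _ (card_le_univ _))
    · obtain ⟨j, hj⟩ := exists_binVec_eq_one q hx
      have h := card_mulVec_eq_zero_mul_card_pow (ι := Fin ℓ) (hj ▸ isUnit_one)
      rw [ZMod.card, Fintype.card_fin] at h
      rw [zero_add, h]
  calc (∑ A : Matrix (Fin ℓ) (Fin m) (ZMod q), #{x : Fin m → Bool | A *ᵥ binVec q x = 0}) *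
        q ^ ℓ
      = ∑ x : Fin m → Bool,
          #{A : Matrix (Fin ℓ) (Fin m) (ZMod q) | A *ᵥ binVec q x = 0} * q ^ ℓ := by
        rw [← sum_mul]
        simp only [card_filter]
        rw [sum_comm]
    _ ≤ ∑ x : Fin m → Bool, ((if x = fun _ => false then N * q ^ ℓ else 0) + N) :=
        sum_le_sum fun x _ => hterm x
    _ = N * (q ^ ℓ + 2 ^ m) := by
        simp [sum_add_distrib]
        ring

theorem statement15_general (q ℓ m : ℕ) (hql : 2 ^ m ≤ q ^ ℓ) [NeZero q] :
    ((Finset.univ.filter (fun A : Matrix (Fin ℓ) (Fin m) (ZMod q) =>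
          2 ^ ℓ < (Finset.univ.filter (fun x : Fin m → Bool =>
            A.mulVec (binVec q x) = 0)).card)).card : ℝ)
        / (Fintype.card (Matrix (Fin ℓ) (Fin m) (ZMod q)) : ℝ)
      ≤ 2 / 2 ^ ℓ := by
  set N := Fintype.card (Matrix (Fin ℓ) (Fin m) (ZMod q))
  set count := fun A : Matrix (Fin ℓ) (Fin m) (ZMod q) =>
    #{x : Fin m → Bool | A *ᵥ binVec q x = 0}
  have hfirst : ∑ A, count A ≤ 2 * N := by
    refine Nat.le_of_mul_le_mul_right ?_ (pow_pos (NeZero.pos q) ℓ)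
    calc (∑ A, count A) * q ^ ℓ ≤ N * (q ^ ℓ + 2 ^ m) :=
          sum_card_mulVec_binVec_eq_zero_mul_le q ℓ m
      _ ≤ N * (q ^ ℓ + q ^ ℓ) := by gcongr
      _ = 2 * N * q ^ ℓ := by ring
  have hmarkov : #{A | 2 ^ ℓ < count A} * 2 ^ ℓ ≤ 2 * N :=
    calc #{A | 2 ^ ℓ < count A} * 2 ^ ℓ ≤ #{A | 2 ^ ℓ ≤ count A} * 2 ^ ℓ := by
          gcongr with A; exact le_of_lt
      _ ≤ ∑ A, count A := card_filter_le_mul_le_sum _ _ _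
      _ ≤ 2 * N := hfirst
  rw [div_le_div_iff₀ (by exact_mod_cast Fintype.card_pos) (by positivity)]
  exact_mod_cast hmarkov

/-- For `q ≥ 2` with `q^ℓ ≥ 2^m` and a uniformly random `ℓ × m` matrix
`A` over `Z/qZ`, the probability that more than `2^ℓ` binary vectors `x ∈ {0,1}^m` satisfy
`A x = 0` is at most `2^{1-ℓ}`. -/
theorem statement15 (q ℓ m : ℕ) (hq : 2 ≤ q) (hl : 1 ≤ ℓ) (hm : 1 ≤ m)
    (hql : 2 ^ m ≤ q ^ ℓ) [NeZero q] :
    ((Finset.univ.filter (fun A : Matrix (Fin ℓ) (Fin m) (ZMod q) =>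
          2 ^ ℓ < (Finset.univ.filter (fun x : Fin m → Bool =>
            A.mulVec (binVec q x) = 0)).card)).card : ℝ)
        / (Fintype.card (Matrix (Fin ℓ) (Fin m) (ZMod q)) : ℝ)
      ≤ 2 / 2 ^ ℓ :=
  statement15_general q ℓ m hql
end
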